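/- arXiv:1405.7147 — 2 statements merged into one kernel-verified Lean document; each statement's English description precedes it below -/
import Mathlib

section
/- Let R be a commutative ring with identity, let k be a non-negative integer and let p = 4k+3 be prime. For all a, b, c in R, the quadratic residue circulant matrix satisfies Q_p(a,b,c) · Q_p(a,b,c)^T = Q_p( a² + (2k+1)(b² + c²), ab + ac + k(b² + c²) + (2k+1)bc, ab + ac + k(b² + c²) + (2k+1)bc ). -/
noncomputable section

open Matrix
open scoped Classical

/-- The quadratic residue circulant matrix `Q_p(a,b,c)`: the `p × p` circulant matrix
(indexed by `ZMod p`) whose `(i,j)` entry is `a` if `j - i = 0`, `b` if `j - i` is a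
nonzero quadratic residue modulo `p`, and `c` if `j - i` is a quadratic non-residue. -/
def Qcirc {R : Type*} [CommRing R] (p : ℕ) (a b c : R) :
    Matrix (ZMod p) (ZMod p) R :=
  Matrix.of fun i j =>
    if j - i = 0 then a else if IsSquare (j - i) then b else c

/-! Write `S = Q_p(0,1,0)`. As `-1` is a non-residue, `Sᵀ = Q_p(0,0,1)`, so
`Q_p(a,b,c) = a + b S + c Sᵀ` and `Q_p(a,b,c)ᵀ = Q_p(a,c,b)`. The span of `1, S, Sᵀ` is
closed under multiplication: the Jacobi sum of the quadratic character gives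
`S Sᵀ = Sᵀ S = (k+1) + k J` (the Paley tournament is doubly regular), and then
`S + Sᵀ = J - 1`, `S J = (2k+1) J` give `S² = k S + (k+1) Sᵀ`. Multiplying out
`Q_p(a,b,c) Q_p(a,c,b)` in this basis gives the identity. -/

section FiniteField

open Finset

variable {F : Type*} [Field F] [Fintype F] [DecidableEq F]

local notation "χ" => quadraticChar F

theorem sum_quadraticChar_mul_quadraticChar_add (hF : ringChar F ≠ 2) {d : F} (hd : d ≠ 0) :
    ∑ x, χ x * χ (x + d) = -1 := by
  have hJ : ∑ y, χ y * χ (1 - y) = -χ (-1) := by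
    have h := jacobiSum_nontrivial_inv (quadraticChar_ne_one hF)
    rwa [(quadraticChar_isQuadratic F).inv] at h
  have hd2 : χ d * χ d = 1 := by rw [← sq]; exact quadraticChar_sq_one hd
  have hm2 : χ (-1) * χ (-1) = 1 := by rw [← sq]; exact quadraticChar_sq_one (by simp)
  calc ∑ x, χ x * χ (x + d) = ∑ y, χ (-d * y) * χ (-d * y + d) :=
        (Equiv.sum_comp (Equiv.mulLeft₀ (-d) (neg_ne_zero.mpr hd)) _).symm
    _ = ∑ y, χ (-1) * (χ y * χ (1 - y)) := by
        refine sum_congr rfl fun y _ => ?_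
        rw [show -d * y + d = d * (1 - y) by ring, show -d * y = -1 * d * y by ring]
        simp only [map_mul]
        linear_combination (χ (-1) * χ y * χ (1 - y)) * hd2
    _ = -1 := by rw [← mul_sum, hJ]; linear_combination -hm2

theorem quadraticChar_add_one_sub_ite_eq (x : F) :
    χ x + 1 - (if x = 0 then 1 else 0) = if χ x = 1 then 2 else 0 := by
  by_cases hx : x = 0
  · simp [hx]
  · rcases quadraticChar_dichotomy hx with h | h <;> simp [hx, h]

theorem two_mul_card_filter_quadraticChar_eq_one (hF : ringChar F ≠ 2) :
    2 * #{x | χ x = 1} + 1 = Fintype.card F := by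
  have h : (2 * #{x | χ x = 1} : ℤ) = Fintype.card F - 1 := by
    rw [natCast_card_filter, mul_sum]
    simp only [mul_ite, mul_one, mul_zero, ← quadraticChar_add_one_sub_ite_eq]
    rw [sum_sub_distrib, sum_add_distrib, quadraticChar_sum_zero hF]
    simp
  omega

theorem four_mul_card_filter_quadraticChar_eq_one_and (hF : ringChar F ≠ 2) {d : F}
    (hd : d ≠ 0) :
    (4 * #{x | χ x = 1 ∧ χ (x + d) = 1} : ℤ) = Fintype.card F - 3 - χ d - χ (-d) := by
  have hpt : ∀ x : F, (if χ x = 1 ∧ χ (x + d) = 1 then 4 else 0 : ℤ) =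
      (χ x + 1 - if x = 0 then 1 else 0) * (χ (x + d) + 1 - if x + d = 0 then 1 else 0) := by
    intro x
    rw [quadraticChar_add_one_sub_ite_eq, quadraticChar_add_one_sub_ite_eq]
    split_ifs <;> simp_all
  have hshift : ∑ x, χ (x + d) = 0 := by
    rw [← quadraticChar_sum_zero hF]
    exact Equiv.sum_comp (Equiv.addRight d) χ
  rw [natCast_card_filter, mul_sum]
  simp only [mul_ite, mul_one, mul_zero, hpt]
  simp only [add_mul, mul_add, sub_mul, mul_sub, sum_add_distrib, sum_sub_distrib, mul_ite,
    ite_mul, mul_one, one_mul, mul_zero, zero_mul, add_eq_zero_iff_eq_neg, sum_ite_eq',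
    mem_univ, if_true, sum_quadraticChar_mul_quadraticChar_add hF hd, hshift,
    quadraticChar_sum_zero hF]
  simp only [zero_add, sum_const, card_univ, nsmul_eq_mul, mul_one, neg_eq_zero, hd, if_false]
  ring

theorem quadraticChar_neg_of_card_mod_four_eq_three (hF : Fintype.card F % 4 = 3) (x : F) :
    χ (-x) = -χ x := by
  have hm : χ (-1) = -1 := quadraticChar_neg_one_iff_not_isSquare.mpr <| by
    rw [FiniteField.isSquare_neg_one_iff]; omega
  rw [neg_eq_neg_one_mul, map_mul, hm, neg_one_mul]

theorem isSquare_neg_iff_of_card_mod_four_eq_three (hF : Fintype.card F % 4 = 3) {x : F}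
    (hx : x ≠ 0) : IsSquare (-x) ↔ ¬IsSquare x := by
  rw [← quadraticChar_neg_one_iff_not_isSquare,
    ← quadraticChar_one_iff_isSquare (neg_ne_zero.mpr hx),
    quadraticChar_neg_of_card_mod_four_eq_three hF, neg_eq_iff_eq_neg]

theorem card_filter_quadraticChar_eq_one_and_add {k : ℕ} (hF : Fintype.card F = 4 * k + 3)
    (d : F) : #{x | χ x = 1 ∧ χ (x + d) = 1} = if d = 0 then 2 * k + 1 else k := by
  have hF2 : ringChar F ≠ 2 := fun h => by
    have := FiniteField.even_card_of_char_two h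
    omega
  split_ifs with hd
  · have := two_mul_card_filter_quadraticChar_eq_one hF2
    simp only [hd, add_zero, and_self]
    omega
  · have := four_mul_card_filter_quadraticChar_eq_one_and hF2 hd
    rw [quadraticChar_neg_of_card_mod_four_eq_three (by omega), hF] at this
    push_cast at this
    omega

end FiniteField

section Qcirc

variable {R : Type*} [CommRing R] {p : ℕ}

theorem qcirc_add (a b c a' b' c' : R) :
    Qcirc p a b c + Qcirc p a' b' c' = Qcirc p (a + a') (b + b') (c + c') := by
  ext i j
  simp only [Qcirc, Matrix.add_apply, of_apply]
  split_ifs <;> rfl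

theorem qcirc_sub (a b c a' b' c' : R) :
    Qcirc p a b c - Qcirc p a' b' c' = Qcirc p (a - a') (b - b') (c - c') := by
  ext i j
  simp only [Qcirc, Matrix.sub_apply, of_apply]
  split_ifs <;> rfl

theorem qcirc_smul (r a b c : R) : r • Qcirc p a b c = Qcirc p (r * a) (r * b) (r * c) := by
  ext i j
  simp only [Qcirc, Matrix.smul_apply, of_apply, smul_eq_mul]
  split_ifs <;> rfl

theorem qcirc_one_zero_zero : Qcirc p (1 : R) 0 0 = 1 := by
  ext i j
  simp only [Qcirc, of_apply, one_apply, sub_eq_zero, eq_comm (a := j), ite_self]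

theorem qcirc_eq_smul_add (a b c : R) :
    Qcirc p a b c = a • 1 + b • Qcirc p 0 1 0 + c • Qcirc p 0 0 1 := by
  rw [← qcirc_one_zero_zero, qcirc_smul, qcirc_smul, qcirc_smul, qcirc_add, qcirc_add]
  simp

theorem qcirc_eq_transpose_circulant (a b c : R) :
    Qcirc p a b c = (circulant fun x => if x = 0 then a else if IsSquare x then b else c)ᵀ :=
  rfl

theorem qcirc_mul_comm [NeZero p] (a b c a' b' c' : R) :
    Qcirc p a b c * Qcirc p a' b' c' = Qcirc p a' b' c' * Qcirc p a b c := by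
  simp only [qcirc_eq_transpose_circulant, ← transpose_mul, circulant_mul_comm]

theorem transpose_qcirc [Fact p.Prime] (hp : p % 4 = 3) (a b c : R) :
    (Qcirc p a b c)ᵀ = Qcirc p a c b := by
  ext i j
  simp only [transpose_apply, Qcirc, of_apply, show i - j = -(j - i) by abel]
  by_cases h : j - i = 0
  · simp [h]
  · simp only [neg_eq_zero, h, if_false,
      isSquare_neg_iff_of_card_mod_four_eq_three (by rwa [ZMod.card]) h]
    split_ifs <;> rfl

theorem qcirc_zero_one_zero_apply [Fact p.Prime] (i j : ZMod p) :
    Qcirc p (0 : R) 1 0 i j = if quadraticChar (ZMod p) (j - i) = 1 then 1 else 0 := by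
  simp only [Qcirc, of_apply]
  by_cases h : j - i = 0
  · simp [h]
  · simp only [h, if_false, quadraticChar_one_iff_isSquare h]
    split_ifs <;> rfl

end Qcirc

section Paley

open Finset

variable {R : Type*} [CommRing R] {k : ℕ} [Fact (4 * k + 3).Prime]

theorem qcirc_zero_one_zero_mul_qcirc_one_one_one :
    Qcirc (4 * k + 3) (0 : R) 1 0 * Qcirc (4 * k + 3) 1 1 1 =
      Qcirc (4 * k + 3) (2 * k + 1 : R) (2 * k + 1) (2 * k + 1) := by
  ext i j
  have hcount : #{x : ZMod (4 * k + 3) | quadraticChar _ x = 1} = 2 * k + 1 := by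
    simpa using card_filter_quadraticChar_eq_one_and_add (ZMod.card (4 * k + 3)) 0
  simp only [mul_apply, qcirc_zero_one_zero_apply]
  simp only [Qcirc, of_apply, ite_self, mul_one]
  rw [Fintype.sum_equiv (Equiv.subRight i)
    (fun m => if quadraticChar _ (m - i) = 1 then (1 : R) else 0)
    (fun x => if quadraticChar _ x = 1 then 1 else 0) fun _ => rfl, sum_boole, hcount]
  push_cast
  ring

theorem qcirc_zero_one_zero_mul_transpose :
    Qcirc (4 * k + 3) (0 : R) 1 0 * (Qcirc (4 * k + 3) 0 1 0)ᵀ =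
      Qcirc (4 * k + 3) (2 * k + 1 : R) k k := by
  ext i j
  have hcount := card_filter_quadraticChar_eq_one_and_add (ZMod.card (4 * k + 3)) (j - i)
  simp only [mul_apply, transpose_apply, qcirc_zero_one_zero_apply, ite_zero_mul_ite_zero,
    mul_one]
  rw [← Equiv.sum_comp (Equiv.addRight j)]
  simp only [Equiv.coe_addRight, add_sub_cancel_right, add_sub_assoc, and_comm, sum_boole]
  rw [hcount]
  simp only [Qcirc, of_apply, ite_self]
  split_ifs <;> push_cast <;> rfl

theorem qcirc_zero_one_zero_mul_self :
    Qcirc (4 * k + 3) (0 : R) 1 0 * Qcirc (4 * k + 3) 0 1 0 =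
      Qcirc (4 * k + 3) (0 : R) k (k + 1) := by
  set S := Qcirc (4 * k + 3) (0 : R) 1 0
  have hJ : Qcirc (4 * k + 3) (1 : R) 1 1 = 1 + S + Sᵀ := by
    rw [transpose_qcirc (by omega), ← qcirc_one_zero_zero, qcirc_add, qcirc_add]
    norm_num
  calc S * S = S * Qcirc (4 * k + 3) 1 1 1 - S - S * Sᵀ := by rw [hJ]; noncomm_ring
    _ = Qcirc (4 * k + 3) (0 : R) k (k + 1) := by
      rw [qcirc_zero_one_zero_mul_qcirc_one_one_one, qcirc_zero_one_zero_mul_transpose, qcirc_sub,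
        qcirc_sub]
      congr 1 <;> ring

theorem qcirc_mul_qcirc (a b c a' b' c' : R) :
    Qcirc (4 * k + 3) a b c * Qcirc (4 * k + 3) a' b' c' =
      Qcirc (4 * k + 3) (a * a' + (2 * k + 1) * (b * c' + c * b'))
        (a * b' + b * a' + k * (b * b' + b * c' + c * b') + (k + 1) * (c * c'))
        (a * c' + c * a' + (k + 1) * (b * b') + k * (c * c' + b * c' + c * b')) := by
  have hp : (4 * k + 3) % 4 = 3 := by omega
  have hSN : Qcirc (4 * k + 3) (0 : R) 1 0 * Qcirc (4 * k + 3) 0 0 1 =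
      Qcirc (4 * k + 3) (2 * k + 1 : R) k k := by
    rw [← transpose_qcirc hp (0 : R) 1 0, qcirc_zero_one_zero_mul_transpose]
  have hNS : Qcirc (4 * k + 3) (0 : R) 0 1 * Qcirc (4 * k + 3) 0 1 0 =
      Qcirc (4 * k + 3) (2 * k + 1 : R) k k := by
    rw [qcirc_mul_comm, hSN]
  have hNN : Qcirc (4 * k + 3) (0 : R) 0 1 * Qcirc (4 * k + 3) 0 0 1 =
      Qcirc (4 * k + 3) (0 : R) (k + 1) k := by
    rw [← transpose_qcirc hp (0 : R) 1 0, ← transpose_mul, qcirc_zero_one_zero_mul_self,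
      transpose_qcirc hp]
  rw [qcirc_eq_smul_add a b c, qcirc_eq_smul_add a' b' c']
  simp only [add_mul, mul_add, smul_mul_smul_comm, one_mul, mul_one,
    qcirc_zero_one_zero_mul_self, hSN, hNS, hNN]
  rw [← qcirc_one_zero_zero]
  simp only [qcirc_smul, qcirc_add]
  congr 1 <;> ring

end Paley

/-- Gaborit's quadratic residue circulant identity for primes `p = 4k + 3`. -/
theorem qcirc_mul_transpose_of_prime_four_mul_add_three
    {R : Type*} [CommRing R] (k : ℕ)
    (hp : Nat.Prime (4 * k + 3)) (a b c : R) :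
    Qcirc (4 * k + 3) a b c * (Qcirc (4 * k + 3) a b c)ᵀ =
      Qcirc (4 * k + 3)
        (a ^ 2 + (2 * (k : R) + 1) * (b ^ 2 + c ^ 2))
        (a * b + a * c + (k : R) * (b ^ 2 + c ^ 2) + (2 * (k : R) + 1) * (b * c))
        (a * b + a * c + (k : R) * (b ^ 2 + c ^ 2) + (2 * (k : R) + 1) * (b * c)) := by
  have : Fact (4 * k + 3).Prime := ⟨hp⟩
  rw [transpose_qcirc (by omega), qcirc_mul_qcirc]
  congr 1 <;> ring

end
end

section
/- Let p be a prime with p ≡ 3 (mod 8). The bordered quadratic double circulant code B_p(1+ω, ω+uω, 1+ω, ω, 1+ω+uω, 1+u+ω) over F₄+uF₄ is a self-dual code of length 2p+2 over F₄+uF₄. -/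
noncomputable section

open Matrix
open scoped Classical

/-- The bordered matrix `M` of size `(p+1) × (p+1)` (rows and columns indexed by
`Option (ZMod p)`, with `none` the border index): `M[none,none] = lam`,
`M[none, some j] = beta`, `M[some i, none] = gam`, and the lower-right `p × p`
block is `Q_p(a,b,c)`. -/
def borderedQ {R : Type*} [CommRing R] (p : ℕ) (a b c lam beta gam : R) :
    Option (ZMod p) → Option (ZMod p) → R := fun i j =>
  match i, j with
  | none, none => lam
  | none, some _ => beta
  | some _, none => gam
  | some i', some j' => Qcirc p a b c i' j'

/-- The rows of the generator matrix `[ I_{p+1} | M ]` of the bordered quadratic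
double circulant code, as vectors of length `2p + 2`. -/
def borderedQDCGen {R : Type*} [CommRing R] (p : ℕ) (a b c lam beta gam : R) :
    Option (ZMod p) → (Option (ZMod p) ⊕ Option (ZMod p)) → R := fun i =>
  Sum.elim (fun j => if i = j then 1 else 0) (fun j => borderedQ p a b c lam beta gam i j)

/-- The bordered quadratic double circulant code `B_p(a,b,c,λ,β,γ)`: the row span of
`[ I_{p+1} | M ]`, a linear code of length `2p + 2` over `R`. -/
def borderedQDC {R : Type*} [CommRing R] (p : ℕ) (a b c lam beta gam : R) :
    Submodule R ((Option (ZMod p) ⊕ Option (ZMod p)) → R) :=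
  Submodule.span R (Set.range (borderedQDCGen p a b c lam beta gam))

/-- The dual of a code `C ⊆ Rⁿ` with respect to the Euclidean inner product. -/
def dualSet {R ι : Type*} [CommRing R] [Fintype ι] (C : Set (ι → R)) : Set (ι → R) :=
  {x | ∀ y ∈ C, ∑ i, x i * y i = 0}

/-- The field `F₄` with four elements. -/
abbrev F4 := GaloisField 2 2

/-- The ring `F₄ + u F₄ = F₄[u]/(u²)`. -/
abbrev R4 := DualNumber F4

section Duality


variable {R ι κ : Type*} [CommRing R] [Fintype ι]

lemma mem_dualSet_span_iff (v : κ → ι → R) (x : ι → R) :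
    x ∈ dualSet ((Submodule.span R (Set.range v) : Submodule R (ι → R)) : Set (ι → R)) ↔
      ∀ k, ∑ i, x i * v k i = 0 := by
  constructor
  · exact fun hx k => hx _ (Submodule.subset_span (Set.mem_range_self k))
  · intro h y hy
    rw [SetLike.mem_coe] at hy
    induction hy using Submodule.span_induction with
    | mem y hy => obtain ⟨k, rfl⟩ := hy; exact h k
    | zero => simp
    | add y z _ _ hy hz =>
        simp only [Pi.add_apply, mul_add, Finset.sum_add_distrib, hy, hz, add_zero]
    | smul r y _ hy =>
        have h1 : ∀ i, x i * (r • y) i = r * (x i * y i) := fun i => by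
          simp only [Pi.smul_apply, smul_eq_mul]; ring
        simp only [h1, ← Finset.mul_sum, hy, mul_zero]

theorem span_gen_self_dual [DecidableEq ι] (M : ι → ι → R)
    (hM : ∀ i j, ∑ k, M i k * M j k = - (if i = j then (1:R) else 0)) :
    (Submodule.span R (Set.range (fun i =>
        Sum.elim (fun j => if i = j then (1:R) else 0) (fun j => M i j))) :
        Set ((ι ⊕ ι) → R)) =
      dualSet (Submodule.span R (Set.range (fun i =>
        Sum.elim (fun j => if i = j then (1:R) else 0) (fun j => M i j))) :
        Set ((ι ⊕ ι) → R)) := by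
  set v : ι → (ι ⊕ ι) → R :=
    fun i => Sum.elim (fun j => if i = j then (1:R) else 0) (fun j => M i j) with hv
  have hid : ∀ k l : ι, ∑ j, (if k = j then (1:R) else 0) * (if l = j then (1:R) else 0)
      = if k = l then 1 else 0 := by
    intro k l
    rw [Finset.sum_eq_single k]
    · by_cases h : k = l <;> simp [h, eq_comm]
    · intro b _ hb; simp [Ne.symm hb]
    · intro h; exact absurd (Finset.mem_univ k) h
  have horth : ∀ k l, ∑ s, v k s * v l s = 0 := by
    intro k l
    rw [Fintype.sum_sum_type]
    simp only [hv, Sum.elim_inl, Sum.elim_inr]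
    rw [hM k l, hid k l]
    ring
  apply Set.Subset.antisymm
  · intro x hx
    rw [SetLike.mem_coe] at hx
    rw [mem_dualSet_span_iff]
    induction hx using Submodule.span_induction with
    | mem y hy => obtain ⟨l, rfl⟩ := hy; exact fun k => horth l k
    | zero => intro k; simp
    | add y z _ _ hy hz =>
        intro k
        simp only [Pi.add_apply, add_mul, Finset.sum_add_distrib, hy k, hz k, add_zero]
    | smul r y _ hy =>
        intro k
        have h1 : ∀ i, (r • y) i * v k i = r * (y i * v k i) := fun i => by
          simp only [Pi.smul_apply, smul_eq_mul]; ring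
        simp only [h1, ← Finset.mul_sum, hy k, mul_zero]
  · intro x hx
    set c : (ι ⊕ ι) → R := fun s => ∑ k, x (Sum.inl k) * v k s with hc
    have hcmem : c ∈ Submodule.span R (Set.range v) := by
      have h1 : c = ∑ k, x (Sum.inl k) • v k := by
        funext s
        rw [hc]
        simp only [Finset.sum_apply, Pi.smul_apply, smul_eq_mul]
      rw [h1]
      exact Submodule.sum_mem _ fun k _ =>
        Submodule.smul_mem _ _ (Submodule.subset_span (Set.mem_range_self k))
    have hcl : ∀ j, c (Sum.inl j) = x (Sum.inl j) := by
      intro j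
      rw [hc]
      simp only [hv, Sum.elim_inl]
      rw [Finset.sum_eq_single j]
      · simp
      · intro b _ hb; simp [hb]
      · intro h; exact absurd (Finset.mem_univ j) h
    have hxv : ∀ i, ∑ s, x s * v i s = 0 := (mem_dualSet_span_iff v x).mp hx
    have hcv : ∀ i, ∑ s, c s * v i s = 0 := by
      intro i
      have h1 : ∀ s, c s * v i s = ∑ k, x (Sum.inl k) * (v k s * v i s) := by
        intro s
        rw [hc, Finset.sum_mul]
        exact Finset.sum_congr rfl fun k _ => by ring
      rw [Finset.sum_congr rfl fun s _ => h1 s, Finset.sum_comm]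
      simp only [← Finset.mul_sum, horth, mul_zero, Finset.sum_const_zero]
    have hMw : ∀ i, ∑ j, M i j * (x (Sum.inr j) - c (Sum.inr j)) = 0 := by
      intro i
      have h0 : ∑ s, (x s - c s) * v i s = 0 := by
        simp only [sub_mul, Finset.sum_sub_distrib, hxv i, hcv i, sub_zero]
      rw [Fintype.sum_sum_type] at h0
      simp only [hv, Sum.elim_inl, Sum.elim_inr] at h0
      have hz : ∀ j, (x (Sum.inl j) - c (Sum.inl j)) * (if i = j then (1:R) else 0) = 0 := by
        intro j; rw [hcl j]; ring
      rw [Finset.sum_congr rfl fun j _ => hz j, Finset.sum_const_zero, zero_add] at h0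
      rw [← h0]
      exact Finset.sum_congr rfl fun j _ => by ring
    have hw0 : ∀ j, x (Sum.inr j) - c (Sum.inr j) = 0 := by
      set w : ι → R := fun j => x (Sum.inr j) - c (Sum.inr j) with hwdef
      let A : Matrix ι ι R := Matrix.of M
      let B : Matrix ι ι R := Matrix.of fun i j => - M j i
      have hAB : A * B = 1 := by
        ext i j
        simp only [Matrix.mul_apply, Matrix.of_apply, Matrix.one_apply, A, B]
        have : ∀ k, M i k * - M j k = -(M i k * M j k) := fun k => by ring
        rw [Finset.sum_congr rfl fun k _ => this k, Finset.sum_neg_distrib, hM i j, neg_neg]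
      have hBA : B * A = 1 := mul_eq_one_comm.mp hAB
      have hAw : A.mulVec w = 0 := by
        funext i
        simpa [A, Matrix.mulVec, dotProduct] using hMw i
      have hwe : w = 0 := by
        have h1 : w = B.mulVec (A.mulVec w) := by
          rw [Matrix.mulVec_mulVec, hBA, Matrix.one_mulVec]
        rw [h1, hAw, Matrix.mulVec_zero]
      intro j
      exact congrFun hwe j
    have hx_eq : x = c := by
      funext s
      cases s with
      | inl j => exact (hcl j).symm
      | inr j => exact (sub_eq_zero.mp (hw0 j))
    rw [SetLike.mem_coe, hx_eq]
    exact hcmem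

end Duality

section NT
variable {p : ℕ} [Fact (Nat.Prime p)]

variable {p : ℕ} [Fact (Nat.Prime p)]

lemma chi_ne_zero {t : ZMod p} (h : quadraticChar (ZMod p) t = 1) : t ≠ 0 := by
  intro h0
  rw [h0, quadraticChar_zero] at h
  exact absurd h (by norm_num)

lemma chi_inv {t : ZMod p} (ht : t ≠ 0) :
    quadraticChar (ZMod p) t⁻¹ = quadraticChar (ZMod p) t := by
  have h1 : quadraticChar (ZMod p) t * quadraticChar (ZMod p) t⁻¹ = 1 := by
    rw [← _root_.map_mul, mul_inv_cancel₀ ht, _root_.map_one]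
  rcases quadraticChar_dichotomy ht with h | h <;>
    rcases quadraticChar_dichotomy (inv_ne_zero ht) with h' | h' <;>
      rw [h, h'] at h1 ⊢ <;> omega

lemma chi_neg_one (h3 : p % 8 = 3) : quadraticChar (ZMod p) (-1) = -1 := by
  have h4 : p % 4 = 3 := by omega
  refine quadraticChar_neg_one_iff_not_isSquare.mpr ?_
  rw [ZMod.exists_sq_eq_neg_one_iff]
  simp [h4]

lemma chi_two (h3 : p % 8 = 3) : quadraticChar (ZMod p) 2 = -1 := by
  have hp2 : p ≠ 2 := by omega
  refine quadraticChar_neg_one_iff_not_isSquare.mpr ?_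
  rw [ZMod.exists_sq_eq_two_iff hp2]
  omega

lemma sum_S {A : Type*} [CommRing A] (h2 : (2:A) = 0) (h3 : p % 8 = 3) :
    ∑ t : ZMod p, (if quadraticChar (ZMod p) t = 1 then (1:A) else 0) = 1 := by
  haveI : Fact (1 < p) := ⟨(Fact.out : p.Prime).one_lt⟩
  rw [← Finset.sum_erase_add _ _ (Finset.mem_univ (1 : ZMod p))]
  have h1 : (if quadraticChar (ZMod p) (1 : ZMod p) = 1 then (1:A) else 0) = 1 := by
    rw [if_pos (_root_.map_one (quadraticChar (ZMod p)))]
  rw [h1]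
  have h0 : ∑ t ∈ Finset.univ.erase (1 : ZMod p),
      (if quadraticChar (ZMod p) t = 1 then (1:A) else 0) = 0 := by
    refine Finset.sum_involution
      (fun a _ => if quadraticChar (ZMod p) a = 1 then a⁻¹ else a) ?_ ?_ ?_ ?_
    · intro a _
      beta_reduce
      by_cases hχ : quadraticChar (ZMod p) a = 1
      · have ha : a ≠ 0 := chi_ne_zero hχ
        rw [if_pos hχ, if_pos hχ, chi_inv ha, if_pos hχ]
        linear_combination h2
      · rw [if_neg hχ, if_neg hχ, if_neg hχ, add_zero]
    · intro a ha hfa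
      have hχ : quadraticChar (ZMod p) a = 1 := by
        by_contra h; exact hfa (if_neg h)
      have ha0 : a ≠ 0 := chi_ne_zero hχ
      beta_reduce
      rw [if_pos hχ]
      intro heq
      have h1 : a * a = 1 := by
        calc a * a = a * a⁻¹ := by rw [heq]
        _ = 1 := mul_inv_cancel₀ ha0
      rcases mul_self_eq_one_iff.mp h1 with rfl | rfl
      · exact (Finset.mem_erase.mp ha).1 rfl
      · rw [chi_neg_one h3] at hχ; omega
    · intro a ha
      rw [Finset.mem_erase] at ha ⊢
      refine ⟨?_, Finset.mem_univ _⟩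
      beta_reduce
      by_cases hχ : quadraticChar (ZMod p) a = 1
      · rw [if_pos hχ]
        intro h; exact ha.1 (by rwa [inv_eq_one] at h)
      · rw [if_neg hχ]; exact ha.1
    · intro a ha
      beta_reduce
      by_cases hχ : quadraticChar (ZMod p) a = 1
      · have ha0 : a ≠ 0 := chi_ne_zero hχ
        rw [if_pos hχ, if_pos (by rw [chi_inv ha0]; exact hχ), inv_inv]
      · rw [if_neg hχ, if_neg hχ]
  rw [h0, zero_add]



lemma sum_SS {A : Type*} [CommRing A] (h2 : (2:A) = 0) (h3 : p % 8 = 3)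
    {d : ZMod p} (hd : d ≠ 0) :
    ∑ t : ZMod p, (if quadraticChar (ZMod p) t = 1 then (1:A) else 0) *
      (if quadraticChar (ZMod p) (t + d) = 1 then (1:A) else 0) = 0 := by
  have main : ∀ σ : ZMod p → ZMod p,
      (∀ t, quadraticChar (ZMod p) t = 1 → quadraticChar (ZMod p) (t + d) = 1 →
        (quadraticChar (ZMod p) (σ t) = 1 ∧ quadraticChar (ZMod p) (σ t + d) = 1) ∧
          σ (σ t) = t ∧ σ t ≠ t) →
      ∑ t : ZMod p, (if quadraticChar (ZMod p) t = 1 then (1:A) else 0) *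
        (if quadraticChar (ZMod p) (t + d) = 1 then (1:A) else 0) = 0 := by
    intro σ H
    refine Finset.sum_involution
      (fun a _ => if quadraticChar (ZMod p) a = 1 ∧ quadraticChar (ZMod p) (a + d) = 1
        then σ a else a) ?_ ?_ ?_ ?_
    · intro a _
      beta_reduce
      by_cases hP : quadraticChar (ZMod p) a = 1 ∧ quadraticChar (ZMod p) (a + d) = 1
      · obtain ⟨⟨hs1, hs2⟩, -, -⟩ := H a hP.1 hP.2
        rw [if_pos hP, if_pos hP.1, if_pos hP.2, if_pos hs1, if_pos hs2]
        linear_combination h2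
      · rw [if_neg hP]
        rcases not_and_or.mp hP with h | h
        · rw [if_neg h, zero_mul, add_zero]
        · rw [if_neg h, mul_zero, add_zero]
    · intro a _ hfa
      beta_reduce
      have hP : quadraticChar (ZMod p) a = 1 ∧ quadraticChar (ZMod p) (a + d) = 1 := by
        by_contra h
        rcases not_and_or.mp h with h' | h'
        · exact hfa (by rw [if_neg h', zero_mul])
        · exact hfa (by rw [if_neg h', mul_zero])
      rw [if_pos hP]
      exact (H a hP.1 hP.2).2.2
    · intro a _; exact Finset.mem_univ _
    · intro a _
      beta_reduce
      by_cases hP : quadraticChar (ZMod p) a = 1 ∧ quadraticChar (ZMod p) (a + d) = 1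
      · obtain ⟨⟨hs1, hs2⟩, hinv, -⟩ := H a hP.1 hP.2
        rw [if_pos hP, if_pos ⟨hs1, hs2⟩, hinv]
      · rw [if_neg hP, if_neg hP]
  rcases quadraticChar_dichotomy hd with hχd | hχd
  · -- d is a nonzero square
    refine main (fun t => d * d * t⁻¹) ?_
    intro t hta htd
    have ht0 : t ≠ 0 := chi_ne_zero hta
    have hrw : d * d * t⁻¹ + d = d * (t + d) * t⁻¹ := by
      field_simp; ring
    refine ⟨⟨?_, ?_⟩, ?_, ?_⟩
    · beta_reduce
      rw [_root_.map_mul, _root_.map_mul, chi_inv ht0, hχd, hta]; norm_num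
    · beta_reduce
      rw [hrw, _root_.map_mul, _root_.map_mul, chi_inv ht0, hχd, htd, hta]; norm_num
    · beta_reduce
      field_simp
    · beta_reduce
      intro heq
      have h5 : d * d = t * t := by
        calc d * d = d * d * t⁻¹ * t := by field_simp
        _ = t * t := by rw [heq]
      have h6 : (t - d) * (t + d) = 0 := by linear_combination -h5
      rcases mul_eq_zero.mp h6 with h7 | h7
      · have h8 : t = d := by linear_combination h7
        rw [h8, show d + d = 2 * d by ring, _root_.map_mul, chi_two h3, hχd] at htd
        norm_num at htd
      · rw [show t + d = 0 from h7, quadraticChar_zero] at htd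
        norm_num at htd
  · -- d is a nonsquare
    refine main (fun t => -(d * t) * (t + d)⁻¹) ?_
    intro t hta htd
    have ht0 : t ≠ 0 := chi_ne_zero hta
    have htd0 : t + d ≠ 0 := chi_ne_zero htd
    have hrw : -(d * t) * (t + d)⁻¹ + d = d * d * (t + d)⁻¹ := by
      field_simp; ring
    refine ⟨⟨?_, ?_⟩, ?_, ?_⟩
    · beta_reduce
      rw [show -(d * t) * (t + d)⁻¹ = (-1) * (d * (t * (t + d)⁻¹)) by ring,
        _root_.map_mul, _root_.map_mul, _root_.map_mul, chi_neg_one h3, hχd, hta, chi_inv htd0, htd]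
      norm_num
    · beta_reduce
      rw [hrw, _root_.map_mul, _root_.map_mul, chi_inv htd0, htd, hχd]
      norm_num
    · beta_reduce
      rw [hrw]
      field_simp
    · beta_reduce
      intro heq
      have h5 : -(d * t) = t * (t + d) := by
        calc -(d * t) = -(d * t) * (t + d)⁻¹ * (t + d) := by field_simp
        _ = t * (t + d) := by rw [heq]
      have h6 : t * (t + 2 * d) = 0 := by linear_combination -h5
      rcases mul_eq_zero.mp h6 with h7 | h7
      · exact ht0 h7
      · have h8 : t = -(2 * d) := by linear_combination h7
        rw [h8, show (-(2 * d) : ZMod p) = (-1) * (2 * d) by ring,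
          _root_.map_mul, _root_.map_mul, chi_neg_one h3, chi_two h3, hχd] at hta
        norm_num at hta

end NT

/-- For a prime `p ≡ 3 (mod 8)` and `ω` a root of `x² + x + 1` in `F₄ + u F₄`,
the bordered quadratic double circulant code
`B_p(1 + ω, ω + uω, 1 + ω, ω, 1 + ω + uω, 1 + u + ω)` over `F₄ + u F₄`
is self-dual of length `2p + 2`. -/
theorem borderedQDC_self_dual_of_mod_eight_eq_three_typeII
    (p : ℕ) [NeZero p] (hp : Nat.Prime p) (h3 : p % 8 = 3)
    (ω : R4) (hω : ω ^ 2 + ω + 1 = 0) :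
    letI u : R4 := DualNumber.eps
    (borderedQDC p (1 + ω) (ω + u * ω) (1 + ω) ω (1 + ω + u * ω) (1 + u + ω) :
        Set ((Option (ZMod p) ⊕ Option (ZMod p)) → R4)) =
      dualSet (borderedQDC p (1 + ω) (ω + u * ω) (1 + ω) ω (1 + ω + u * ω) (1 + u + ω) :
        Set ((Option (ZMod p) ⊕ Option (ZMod p)) → R4)) := by
  haveI : Fact (Nat.Prime p) := ⟨hp⟩
  set u : R4 := DualNumber.eps with hu
  have huu : u * u = 0 := DualNumber.eps_mul_eps
  have h2R : (2 : R4) = 0 := by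
    have h4 : (2 : F4) = 0 := by
      have h5 : ((2 : ℕ) : F4) = 0 := CharP.cast_eq_zero F4 2
      exact_mod_cast h5
    calc (2 : R4) = algebraMap F4 R4 (2 : F4) := by rw [_root_.map_ofNat]
    _ = 0 := by rw [h4, _root_.map_zero]
  have hpcast : ((p : ℕ) : R4) = 1 := by
    obtain ⟨m, hm⟩ : ∃ m, p = 2 * m + 1 := ⟨p / 2, by omega⟩
    rw [hm]
    push_cast
    linear_combination (m : R4) * h2R
  have hconst : ∀ x : R4, (∑ _k : ZMod p, x) = x := by
    intro x
    rw [Finset.sum_const, Finset.card_univ, ZMod.card, nsmul_eq_mul, hpcast, one_mul]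
  set S : ZMod p → R4 := fun t => if quadraticChar (ZMod p) t = 1 then (1 : R4) else 0
    with hSdef
  have hsum_S : ∑ t : ZMod p, S t = 1 := sum_S h2R h3
  have hQ : ∀ i k : ZMod p, Qcirc p (1 + ω) (ω + u * ω) (1 + ω) i k
      = (1 + ω) + ((ω + u * ω) - (1 + ω)) * S (k - i) := by
    intro i k
    simp only [Qcirc, Matrix.of_apply, hSdef]
    by_cases h0 : k - i = 0
    · rw [if_pos h0, h0, if_neg (by rw [quadraticChar_zero]; norm_num)]
      ring
    · rw [if_neg h0]
      by_cases hsq : IsSquare (k - i)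
      · rw [if_pos hsq, if_pos ((quadraticChar_one_iff_isSquare h0).mpr hsq)]
        ring
      · rw [if_neg hsq,
          if_neg (fun hχ => hsq ((quadraticChar_one_iff_isSquare h0).mp hχ))]
        ring
  have hS1 : ∀ i : ZMod p, ∑ k : ZMod p, S (k - i) = 1 := by
    intro i
    rw [Fintype.sum_equiv (Equiv.subRight i) (fun k => S (k - i)) S (fun k => rfl)]
    exact hsum_S
  have hSS : ∀ t : ZMod p, S t * S t = S t := by
    intro t
    simp only [hSdef]
    by_cases h : quadraticChar (ZMod p) t = 1
    · rw [if_pos h, mul_one]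
    · rw [if_neg h, mul_zero]
  have hS2 : ∀ i j : ZMod p, i ≠ j → ∑ k : ZMod p, S (k - i) * S (k - j) = 0 := by
    intro i j hij
    have hd : i - j ≠ 0 := sub_ne_zero.mpr hij
    rw [Fintype.sum_equiv (Equiv.subRight i) (fun k => S (k - i) * S (k - j))
      (fun t => S t * S (t + (i - j)))
      (fun k => by
        simp only [Equiv.subRight_apply]
        rw [show k - i + (i - j) = k - j from by ring])]
    exact sum_SS h2R h3 hd
  have hQrow : ∀ i : ZMod p, ∑ k : ZMod p, Qcirc p (1 + ω) (ω + u * ω) (1 + ω) i k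
      = (1 + ω) + ((ω + u * ω) - (1 + ω)) := by
    intro i
    rw [Finset.sum_congr rfl fun k _ => hQ i k, Finset.sum_add_distrib,
      ← Finset.mul_sum, hS1 i, hconst (1 + ω), mul_one]
  have hQQ : ∀ i j : ZMod p,
      (∑ k : ZMod p, Qcirc p (1 + ω) (ω + u * ω) (1 + ω) i k *
        Qcirc p (1 + ω) (ω + u * ω) (1 + ω) j k)
      = (1 + ω) * (1 + ω) + ((ω + u * ω) - (1 + ω)) * ((ω + u * ω) - (1 + ω)) *
          (if i = j then (1 : R4) else 0) := by
    intro i j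
    have hexp : ∀ k : ZMod p, Qcirc p (1 + ω) (ω + u * ω) (1 + ω) i k *
        Qcirc p (1 + ω) (ω + u * ω) (1 + ω) j k
        = (1 + ω) * (1 + ω) + (((ω + u * ω) - (1 + ω)) * (1 + ω)) * S (k - i)
          + (((ω + u * ω) - (1 + ω)) * (1 + ω)) * S (k - j)
          + (((ω + u * ω) - (1 + ω)) * ((ω + u * ω) - (1 + ω))) * (S (k - i) * S (k - j)) := by
      intro k; rw [hQ i k, hQ j k]; ring
    rw [Finset.sum_congr rfl fun k _ => hexp k]
    rw [Finset.sum_add_distrib, Finset.sum_add_distrib, Finset.sum_add_distrib,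
      hconst ((1 + ω) * (1 + ω)),
      ← Finset.mul_sum, ← Finset.mul_sum, ← Finset.mul_sum, hS1 i, hS1 j]
    by_cases hij : i = j
    · subst hij
      rw [if_pos rfl]
      have h1 : ∑ k : ZMod p, S (k - i) * S (k - i) = 1 := by
        rw [Finset.sum_congr rfl fun k _ => hSS (k - i)]
        exact hS1 i
      rw [h1]
      linear_combination (((ω + u * ω) - (1 + ω)) * (1 + ω)) * h2R
    · rw [if_neg hij, hS2 i j hij]
      linear_combination (((ω + u * ω) - (1 + ω)) * (1 + ω)) * h2R
  have hGram : ∀ i j : Option (ZMod p),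
      ∑ k : Option (ZMod p),
        borderedQ p (1 + ω) (ω + u * ω) (1 + ω) ω (1 + ω + u * ω) (1 + u + ω) i k *
        borderedQ p (1 + ω) (ω + u * ω) (1 + ω) ω (1 + ω + u * ω) (1 + u + ω) j k
        = - (if i = j then (1 : R4) else 0) := by
    intro i j
    cases i with
    | none =>
      cases j with
      | none =>
        rw [Fintype.sum_option]
        show ω * ω + (∑ _k : ZMod p, (1 + ω + u * ω) * (1 + ω + u * ω))
          = -(if (none : Option (ZMod p)) = none then (1 : R4) else 0)
        rw [hconst ((1 + ω + u * ω) * (1 + ω + u * ω)), if_pos rfl]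
        linear_combination 2 * hω + ω ^ 2 * huu + (u * ω + u * ω ^ 2) * h2R
      | some j' =>
        rw [Fintype.sum_option]
        show ω * (1 + u + ω) + (∑ k : ZMod p,
            (1 + ω + u * ω) * Qcirc p (1 + ω) (ω + u * ω) (1 + ω) j' k)
          = -(if (none : Option (ZMod p)) = some j' then (1 : R4) else 0)
        rw [← Finset.mul_sum, hQrow j', if_neg (by simp)]
        linear_combination 2 * hω + ω ^ 2 * huu + (u * ω + u * ω ^ 2 - 1) * h2R
    | some i' =>
      cases j with
      | none =>
        rw [Fintype.sum_option]
        show (1 + u + ω) * ω + (∑ k : ZMod p,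
            Qcirc p (1 + ω) (ω + u * ω) (1 + ω) i' k * (1 + ω + u * ω))
          = -(if (some i' : Option (ZMod p)) = none then (1 : R4) else 0)
        rw [← Finset.sum_mul, hQrow i', if_neg (by simp)]
        linear_combination 2 * hω + ω ^ 2 * huu + (u * ω + u * ω ^ 2 - 1) * h2R
      | some j' =>
        rw [Fintype.sum_option]
        show (1 + u + ω) * (1 + u + ω) + (∑ k : ZMod p,
            Qcirc p (1 + ω) (ω + u * ω) (1 + ω) i' k *
            Qcirc p (1 + ω) (ω + u * ω) (1 + ω) j' k)
          = -(if (some i' : Option (ZMod p)) = some j' then (1 : R4) else 0)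
        rw [hQQ i' j']
        by_cases h : i' = j'
        · rw [if_pos h, if_pos (by rw [h])]
          linear_combination 2 * hω + (1 + ω ^ 2) * huu + (1 + ω + u) * h2R
        · rw [if_neg h, if_neg (by simp [h])]
          linear_combination 2 * hω + huu + (ω + u + u * ω) * h2R
  exact span_gen_self_dual
    (borderedQ p (1 + ω) (ω + u * ω) (1 + ω) ω (1 + ω + u * ω) (1 + u + ω)) hGram

end
end
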